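/- arXiv:1408.6312 — 4 statements merged into one kernel-verified Lean document; each statement's English description precedes it below -/
import Mathlib

section
/- Let f be a non-constant polynomial all of whose zeros have multiplicity at least 2, and let n₁ be a positive integer. Then for any nonzero complex number c, the polynomial f·(f')^{n₁} − c has at least two distinct zeros; that is, f·(f')^{n₁} cannot be of the form c + B(z−z₀)^l with B ≠ 0 and l > 1. -/
open Polynomial

theorem stmt0 (f : ℂ[X]) (hf : 1 ≤ f.natDegree)
    (hmult : ∀ z : ℂ, f.IsRoot z → 2 ≤ f.rootMultiplicity z)
    (n₁ : ℕ) (hn₁ : 1 ≤ n₁) (c : ℂ) (hc : c ≠ 0) :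
    ∃ z₁ z₂ : ℂ, z₁ ≠ z₂ ∧
      (f * (derivative f) ^ n₁ - C c).IsRoot z₁ ∧
      (f * (derivative f) ^ n₁ - C c).IsRoot z₂ := by
  by_contra hcon
  push_neg at hcon
  set g : ℂ[X] := f * (derivative f) ^ n₁ - C c with hgdef
  have hf0 : f ≠ 0 := fun h => by simp [h] at hf
  -- f has a root w
  obtain ⟨w, hw⟩ := Complex.exists_root (f := f) (by
    rw [degree_eq_natDegree hf0]; exact_mod_cast Nat.lt_of_lt_of_le Nat.zero_lt_one hf)
  -- derivative of f vanishes at w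
  have hmw : 2 ≤ f.rootMultiplicity w := hmult w hw
  have hdw : (derivative f).IsRoot w := by
    have h1 : 0 < (derivative f).rootMultiplicity w := by
      rw [derivative_rootMultiplicity_of_root hw]; omega
    exact (rootMultiplicity_pos'.mp h1).2
  have hd0 : derivative f ≠ 0 := by
    have h1 : 0 < (derivative f).rootMultiplicity w := by
      rw [derivative_rootMultiplicity_of_root hw]; omega
    exact (rootMultiplicity_pos'.mp h1).1
  -- natDegree f ≥ 2
  have hd2 : 2 ≤ f.natDegree := by
    calc 2 ≤ f.rootMultiplicity w := hmw
    _ = f.roots.count w := (count_roots f).symm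
    _ ≤ Multiset.card f.roots := Multiset.count_le_card _ _
    _ ≤ f.natDegree := card_roots' f
  -- natDegree g ≥ 2
  have hgdeg : 2 ≤ g.natDegree := by
    rw [hgdef, natDegree_sub_C, natDegree_mul hf0 (pow_ne_zero _ hd0)]
    omega
  have hg0 : g ≠ 0 := fun h => by simp [h] at hgdeg
  -- g has a root z₀
  obtain ⟨z₀, hz₀⟩ := Complex.exists_root (f := g) (by
    rw [degree_eq_natDegree hg0]; exact_mod_cast (by omega : 0 < g.natDegree))
  -- w is not a root of g
  have hgw : ¬ g.IsRoot w := by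
    simp only [hgdef, IsRoot, eval_sub, eval_mul, eval_pow, eval_C, hw.eq_zero, zero_mul,
      zero_sub, neg_eq_zero]
    exact hc
  have hwz : w ≠ z₀ := fun h => hgw (h ▸ hz₀)
  -- every root of g equals z₀
  have huniq : ∀ x, g.IsRoot x → x = z₀ := by
    intro x hx
    by_contra hne
    exact hcon x z₀ hne hx hz₀
  -- rootMultiplicity z₀ g = natDegree g
  have hcard : Multiset.card g.roots = g.natDegree :=
    splits_iff_card_roots.mp (IsAlgClosed.splits g)
  have hcount : g.roots.count z₀ = Multiset.card g.roots := by
    rw [Multiset.count_eq_card]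
    intro x hx
    exact (huniq x ((mem_roots hg0).mp hx)).symm
  have hmz : g.rootMultiplicity z₀ = g.natDegree := by
    rw [← count_roots, hcount, hcard]
  -- derivative of g
  have hg'0 : derivative g ≠ 0 := by
    intro h
    have := natDegree_eq_zero_of_derivative_eq_zero h
    omega
  have hmz' : (derivative g).rootMultiplicity z₀ = g.natDegree - 1 := by
    rw [derivative_rootMultiplicity_of_root hz₀, hmz]
  -- w is a root of derivative g
  have hgw' : (derivative g).IsRoot w := by
    simp only [hgdef, derivative_sub, derivative_C, sub_zero, derivative_mul, IsRoot, eval_add,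
      eval_mul, eval_pow, hw.eq_zero, hdw.eq_zero, zero_mul, mul_zero, add_zero, zero_pow,
      zero_add]
  -- counting roots of derivative g gives a contradiction
  have hle : Multiset.replicate (g.natDegree - 1) z₀ + {w} ≤ (derivative g).roots := by
    rw [Multiset.le_iff_count]
    intro x
    rw [Multiset.count_add, Multiset.count_replicate, Multiset.count_singleton]
    by_cases hx : z₀ = x
    · subst hx
      rw [if_pos rfl, if_neg (Ne.symm hwz), add_zero, count_roots, hmz']
    · rw [if_neg hx]
      by_cases hx2 : x = w
      · subst hx2
        rw [if_pos rfl, zero_add, count_roots]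
        exact (rootMultiplicity_pos hg'0).mpr hgw'
      · rw [if_neg hx2]
        omega
  have h1 : (g.natDegree - 1) + 1 ≤ Multiset.card (derivative g).roots := by
    have := Multiset.card_le_card hle
    simpa using this
  have h2 : Multiset.card (derivative g).roots ≤ g.natDegree - 1 :=
    (card_roots' _).trans (natDegree_derivative_le g)
  omega
end

section
/- Let n ≥ 2, k ≥ 1, n_k ≥ 1 be integers and n₁,…,n_{k−1} nonnegative integers. Let f be a non-constant polynomial over ℂ all of whose zeros have multiplicity at least k. Then for any nonzero complex number c, the polynomial f^n·(f')^{n₁}·…·(f^{(k)})^{n_k} − c has at least two distinct zeros. -/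
open Polynomial

/-!
Write `M = f ^ n * G` with `G = ∏ (f^{(j)}) ^ (ν j)`. Since every zero of `f` has multiplicity
at least `k`, `deg f ≥ k`, so `G ≠ 0` and `M` is non-constant. As `n ≥ 2`, every zero `w` of `f`
is a critical point of `M` with critical value `0 ≠ c`. If `M - c` had a single zero `z₀`, it
would be `a (X - z₀) ^ d`, whose derivative vanishes only at `z₀`; hence `w = z₀` and `M(w) = c`.
-/

namespace Polynomial

section IterateDerivative

variable {R : Type*} [Semiring R] [IsAddTorsionFree R]

theorem natDegree_iterate_derivative_eq (p : R[X]) (j : ℕ) :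
    (derivative^[j] p).natDegree = p.natDegree - j := by
  induction j with
  | zero => rfl
  | succ j ih => rw [Function.iterate_succ_apply', natDegree_derivative, ih, Nat.sub_sub]

theorem iterate_derivative_ne_zero {p : R[X]} (hp : p ≠ 0) {j : ℕ} (hj : j ≤ p.natDegree) :
    derivative^[j] p ≠ 0 := by
  induction j with
  | zero => exact hp
  | succ j ih =>
    rw [Function.iterate_succ_apply', Ne, derivative_eq_zero, natDegree_iterate_derivative_eq]
    omega

end IterateDerivative

theorem isRoot_derivative_pow_mul {R : Type*} [CommRing R] {f g : R[X]} {n : ℕ} (hn : 2 ≤ n)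
    {w : R} (hw : f.IsRoot w) : (derivative (f ^ n * g)).IsRoot w := by
  obtain ⟨m, rfl⟩ := Nat.exists_eq_add_of_le hn
  simp [derivative_mul, derivative_pow, hw.eq_zero]

section IsAlgClosed

variable {K : Type*} [Field K] [IsAlgClosed K]

theorem eq_C_leadingCoeff_mul_X_sub_C_pow_of_forall_isRoot_eq {p : K[X]} {z₀ : K}
    (h : ∀ z, p.IsRoot z → z = z₀) : p = C p.leadingCoeff * (X - C z₀) ^ p.natDegree := by
  have hroots : p.roots = Multiset.replicate p.natDegree z₀ :=
    Multiset.eq_replicate.mpr ⟨IsAlgClosed.card_roots_eq_natDegree,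
      fun z hz => h z (isRoot_of_mem_roots hz)⟩
  conv_lhs => rw [(IsAlgClosed.splits p).eq_prod_roots, hroots]
  simp

variable [CharZero K]

theorem eq_of_isRoot_derivative_of_forall_isRoot_eq {p : K[X]} (hp : 0 < p.natDegree) {z₀ w : K}
    (h : ∀ z, p.IsRoot z → z = z₀) (hw : (derivative p).IsRoot w) : w = z₀ := by
  have hlc : p.leadingCoeff ≠ 0 := leadingCoeff_ne_zero.mpr (ne_zero_of_natDegree_gt hp)
  rw [eq_C_leadingCoeff_mul_X_sub_C_pow_of_forall_isRoot_eq h] at hw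
  have hwz₀ : w - z₀ = 0 ∧ p.natDegree - 1 ≠ 0 := by
    simpa [derivative_mul, derivative_pow, hlc, hp.ne'] using hw
  exact sub_eq_zero.mp hwz₀.1

theorem exists_ne_isRoot_sub_C_of_isRoot_derivative {M : K[X]} (hM : 0 < M.natDegree) {w c : K}
    (hw : (derivative M).IsRoot w) (hwc : M.eval w ≠ c) :
    ∃ z₁ z₂ : K, z₁ ≠ z₂ ∧ (M - C c).IsRoot z₁ ∧ (M - C c).IsRoot z₂ := by
  have hdeg : 0 < (M - C c).natDegree := by rwa [natDegree_sub_C]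
  obtain ⟨z₀, hz₀⟩ := IsAlgClosed.exists_root (M - C c) (natDegree_pos_iff_degree_pos.mp hdeg).ne'
  by_contra! hunique
  have hroot_eq : ∀ z, (M - C c).IsRoot z → z = z₀ := fun z hz =>
    by_contra fun hne => hunique z z₀ hne hz hz₀
  have hwz₀ : w = z₀ := eq_of_isRoot_derivative_of_forall_isRoot_eq hdeg hroot_eq (by simpa using hw)
  subst hwz₀
  exact hwc (sub_eq_zero.mp (by simpa using hz₀))

end IsAlgClosed

theorem prod_iterate_derivative_pow_ne_zero {R : Type*} [CommSemiring R] [IsDomain R]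
    [IsAddTorsionFree R] {f : R[X]} (hf : f ≠ 0) {k : ℕ} (hk : k ≤ f.natDegree) (ν : ℕ → ℕ) :
    ∏ j ∈ Finset.Icc 1 k, (derivative^[j] f) ^ ν j ≠ 0 :=
  Finset.prod_ne_zero_iff.mpr fun _ hj =>
    pow_ne_zero _ (iterate_derivative_ne_zero hf ((Finset.mem_Icc.mp hj).2.trans hk))

end Polynomial

theorem stmt1_general (n k : ℕ) (hn : 2 ≤ n) (ν : ℕ → ℕ)
    (f : ℂ[X]) (hf : 1 ≤ f.natDegree)
    (hmult : ∀ z : ℂ, f.IsRoot z → k ≤ f.rootMultiplicity z)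
    (c : ℂ) (hc : c ≠ 0) :
    ∃ z₁ z₂ : ℂ, z₁ ≠ z₂ ∧
      (f ^ n * ∏ j ∈ Finset.Icc 1 k, (derivative^[j] f) ^ (ν j) - C c).IsRoot z₁ ∧
      (f ^ n * ∏ j ∈ Finset.Icc 1 k, (derivative^[j] f) ^ (ν j) - C c).IsRoot z₂ := by
  have hf0 : f ≠ 0 := ne_zero_of_natDegree_gt hf
  obtain ⟨w, hw⟩ := Complex.exists_root (natDegree_pos_iff_degree_pos.mp hf)
  have hk_le : k ≤ f.natDegree := calc
    k ≤ f.rootMultiplicity w := hmult w hw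
    _ = f.roots.count w := (count_roots f).symm
    _ ≤ Multiset.card f.roots := Multiset.count_le_card _ _
    _ ≤ f.natDegree := card_roots' f
  have hG := prod_iterate_derivative_pow_ne_zero hf0 hk_le ν
  refine exists_ne_isRoot_sub_C_of_isRoot_derivative ?_ (isRoot_derivative_pow_mul hn hw) ?_
  · rw [natDegree_mul (pow_ne_zero n hf0) hG, natDegree_pow]
    nlinarith
  · simpa [hw.eq_zero, zero_pow (by omega : n ≠ 0)] using hc.symm

theorem stmt1 (n k : ℕ) (hn : 2 ≤ n) (hk : 1 ≤ k) (ν : ℕ → ℕ) (hνk : 1 ≤ ν k)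
    (f : ℂ[X]) (hf : 1 ≤ f.natDegree)
    (hmult : ∀ z : ℂ, f.IsRoot z → k ≤ f.rootMultiplicity z)
    (c : ℂ) (hc : c ≠ 0) :
    ∃ z₁ z₂ : ℂ, z₁ ≠ z₂ ∧
      (f ^ n * ∏ j ∈ Finset.Icc 1 k, (derivative^[j] f) ^ (ν j) - C c).IsRoot z₁ ∧
      (f ^ n * ∏ j ∈ Finset.Icc 1 k, (derivative^[j] f) ^ (ν j) - C c).IsRoot z₂ :=
  stmt1_general n k hn ν f hf hmult c hc
end

section
/- Let f be a rational function written as f = A·∏_{i=1}^{s}(z−a_i)^{m_i} / ∏_{j=1}^{t}(z−b_j)^{l_j} with A ≠ 0, all a_i, b_j distinct, m_i ≥ k and l_j ≥ 1. Then the k-th derivative has the form f^{(k)} = A·∏_i (z−a_i)^{m_i−k} · g_k(z) / ∏_j (z−b_j)^{l_j+k}, where g_k is a polynomial with deg(g_k) ≤ k(s+t−1) whose coefficient of z^{k(s+t−1)} equals (M−N)(M−N−1)⋯(M−N−k+1), with M = Σ m_i and N = Σ l_j. -/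
open Polynomial Lagrange Finset Filter Topology

/-!
Induction on the order of the derivative. Write `f⁽ⁿ⁾ = A P g / Q` with `P = ∏ (z - aᵢ)^(mᵢ - n)`
and `Q = ∏ (z - bⱼ)^(lⱼ + n)`, and let `Nₐ = ∏ (z - aᵢ)`, `N_b = ∏ (z - bⱼ)`, so that `P = P₁ Nₐ`.
The logarithmic derivatives are `P' / P = Sₐ / Nₐ` and `Q' / Q = S_b / N_b` with
`Sₐ = Σ (mᵢ - n) ∏_{i' ≠ i} (z - aᵢ')`, `S_b = Σ (lⱼ + n) ∏_{j' ≠ j} (z - bⱼ')`, so the quotient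
rule gives `f⁽ⁿ⁺¹⁾ = A P₁ (Sₐ g N_b + Nₐ g' N_b - Nₐ g S_b) / (Q N_b)`. Each step raises the degree
bound by `s + t - 1` and multiplies the coefficient at the bound by
`Σ (mᵢ - n) + n (s + t - 1) - Σ (lⱼ + n) = M - N - n`.
-/
namespace Polynomial

variable {R ι : Type*} [CommRing R]

def DegLEWithCoeff (p : R[X]) (d : ℕ) (c : R) : Prop :=
  p.natDegree ≤ d ∧ p.coeff d = c

namespace DegLEWithCoeff

variable {p q : R[X]} {d e : ℕ} {c c' : R}

theorem mul (hp : DegLEWithCoeff p d c) (hq : DegLEWithCoeff q e c') :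
    DegLEWithCoeff (p * q) (d + e) (c * c') :=
  ⟨natDegree_mul_le_of_le hp.1 hq.1, by rw [coeff_mul_add_eq_of_natDegree_le hp.1 hq.1, hp.2, hq.2]⟩

theorem add (hp : DegLEWithCoeff p d c) (hq : DegLEWithCoeff q d c') :
    DegLEWithCoeff (p + q) d (c + c') :=
  ⟨natDegree_add_le_of_degree_le hp.1 hq.1, by rw [coeff_add, hp.2, hq.2]⟩

theorem sub (hp : DegLEWithCoeff p d c) (hq : DegLEWithCoeff q d c') :
    DegLEWithCoeff (p - q) d (c - c') :=
  ⟨(natDegree_sub_le_of_le hp.1 hq.1).trans (max_self d).le, by rw [coeff_sub, hp.2, hq.2]⟩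

theorem C_mul (r : R) (hp : DegLEWithCoeff p d c) : DegLEWithCoeff (C r * p) d (r * c) :=
  ⟨(natDegree_C_mul_le r p).trans hp.1, by rw [coeff_C_mul, hp.2]⟩

theorem sum {s : Finset ι} {p : ι → R[X]} {c : ι → R}
    (h : ∀ i ∈ s, DegLEWithCoeff (p i) d (c i)) :
    DegLEWithCoeff (∑ i ∈ s, p i) d (∑ i ∈ s, c i) :=
  ⟨natDegree_sum_le_of_forall_le _ _ fun i hi => (h i hi).1,
    by rw [finsetSum_coeff]; exact sum_congr rfl fun i hi => (h i hi).2⟩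

theorem mul_derivative (hq : DegLEWithCoeff q e c') (hp : DegLEWithCoeff p d c) :
    DegLEWithCoeff (q * derivative p) (e + d - 1) (c' * (d * c)) := by
  cases d with
  | zero =>
    rw [derivative_of_natDegree_zero (Nat.le_zero.1 hp.1)]
    simp [DegLEWithCoeff]
  | succ d =>
    have hp' : DegLEWithCoeff (derivative p) d ((d + 1 : ℕ) * c) :=
      ⟨(natDegree_derivative_le p).trans (by have := hp.1; omega),
        by rw [coeff_derivative, hp.2]; push_cast; ring⟩
    simpa using hq.mul hp'

end DegLEWithCoeff

theorem degLEWithCoeff_nodal [Nontrivial R] (s : Finset ι) (v : ι → R) :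
    DegLEWithCoeff (nodal s v) #s 1 :=
  ⟨natDegree_nodal.le, natDegree_nodal (s := s) (v := v) ▸ nodal_monic.coeff_natDegree⟩

noncomputable def logDerivNumerator [DecidableEq ι] (s : Finset ι) (v : ι → R) (e : ι → ℕ) : R[X] :=
  ∑ i ∈ s, C (e i : R) * nodal (s.erase i) v

theorem degLEWithCoeff_logDerivNumerator [Nontrivial R] [DecidableEq ι] (s : Finset ι)
    (v : ι → R) (e : ι → ℕ) :
    DegLEWithCoeff (logDerivNumerator s v e) (#s - 1) (∑ i ∈ s, (e i : R)) :=
  DegLEWithCoeff.sum fun i hi => by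
    simpa [card_erase_of_mem hi] using (degLEWithCoeff_nodal (s.erase i) v).C_mul (e i : R)

theorem derivative_prod_X_sub_C_pow_mul_nodal [DecidableEq ι] (s : Finset ι) (v : ι → R)
    (e : ι → ℕ) :
    derivative (∏ i ∈ s, (X - C (v i)) ^ e i) * nodal s v
      = (∏ i ∈ s, (X - C (v i)) ^ e i) * logDerivNumerator s v e := by
  rw [derivative_prod_finset, sum_mul, logDerivNumerator, mul_sum]
  refine sum_congr rfl fun i hi => ?_
  have hpow : C (e i : R) * (X - C (v i)) ^ (e i - 1) * (X - C (v i))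
      = C (e i : R) * (X - C (v i)) ^ e i := by
    rcases Nat.eq_zero_or_pos (e i) with h | h
    · simp [h]
    · rw [mul_assoc, ← pow_succ, Nat.sub_add_cancel h]
  rw [derivative_X_sub_C_pow, nodal_eq_mul_nodal_erase hi, ← mul_prod_erase s _ hi]
  linear_combination (∏ j ∈ s.erase i, (X - C (v j)) ^ e j) * nodal (s.erase i) v * hpow

theorem prod_X_sub_C_pow_succ (s : Finset ι) (v : ι → R) (e : ι → ℕ) :
    ∏ i ∈ s, (X - C (v i)) ^ (e i + 1) = (∏ i ∈ s, (X - C (v i)) ^ e i) * nodal s v := by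
  simp only [nodal, pow_succ, prod_mul_distrib]

theorem derivative_prod_X_sub_C_pow_succ [IsDomain R] [DecidableEq ι] (s : Finset ι) (v : ι → R)
    (e : ι → ℕ) :
    derivative (∏ i ∈ s, (X - C (v i)) ^ (e i + 1))
      = (∏ i ∈ s, (X - C (v i)) ^ e i) * logDerivNumerator s v (e · + 1) :=
  mul_right_cancel₀ nodal_ne_zero <| by
    rw [derivative_prod_X_sub_C_pow_mul_nodal, prod_X_sub_C_pow_succ]
    ring

noncomputable def derivNumerator (Na Sa Nb Sb g : R[X]) : R[X] :=
  Sa * g * Nb + Na * derivative g * Nb - Na * g * Sb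

theorem DegLEWithCoeff.derivNumerator {Na Sa Nb Sb g : R[X]} {s t D : ℕ} {σ τ c : R}
    (hg : DegLEWithCoeff g D c) (hs : 1 ≤ s) (ht : 1 ≤ t) (hNa : DegLEWithCoeff Na s 1)
    (hSa : DegLEWithCoeff Sa (s - 1) σ) (hNb : DegLEWithCoeff Nb t 1)
    (hSb : DegLEWithCoeff Sb (t - 1) τ) :
    DegLEWithCoeff (Polynomial.derivNumerator Na Sa Nb Sb g) (D + (s + t - 1))
      ((σ + D - τ) * c) := by
  have h₁ := (hSa.mul hg).mul hNb
  have h₂ := (hNa.mul_derivative hg).mul hNb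
  have h₃ := (hNa.mul hg).mul hSb
  rw [show s - 1 + D + t = D + (s + t - 1) by omega] at h₁
  rw [show s + D - 1 + t = D + (s + t - 1) by omega] at h₂
  rw [show s + D + (t - 1) = D + (s + t - 1) by omega] at h₃
  unfold Polynomial.derivNumerator
  convert (h₁.add h₂).sub h₃ using 1
  ring

theorem deriv_eq_of_eventuallyEq_eval_div {𝕜 : Type*} [NontriviallyNormedField 𝕜] {F : 𝕜 → 𝕜}
    {z A : 𝕜} {P₀ P₁ Na Sa Q Nb Sb g : 𝕜[X]}
    (hF : F =ᶠ[𝓝 z] fun w => A * P₀.eval w * g.eval w / Q.eval w)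
    (hP₀ : P₀ = P₁ * Na) (hP₀' : derivative P₀ = P₁ * Sa) (hQ' : derivative Q * Nb = Q * Sb)
    (hQz : Q.eval z ≠ 0) (hNbz : Nb.eval z ≠ 0) :
    deriv F z = A * P₁.eval z * (derivNumerator Na Sa Nb Sb g).eval z / (Q.eval z * Nb.eval z) := by
  have key : (derivative (C A * P₀ * g) * Q - C A * P₀ * g * derivative Q) * Nb
      = C A * P₁ * derivNumerator Na Sa Nb Sb g * Q := by
    simp only [derivNumerator, derivative_mul, derivative_C, zero_mul, zero_add]
    linear_combination (C A * g * Q * Nb) * hP₀'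
      + (C A * derivative g * Q * Nb - C A * g * Q * Sb) * hP₀ - (C A * P₀ * g) * hQ'
  have hFz : (fun w => A * P₀.eval w * g.eval w / Q.eval w)
      = fun w => (C A * P₀ * g).eval w / Q.eval w := by
    simp only [eval_mul, eval_C]
  rw [hF.deriv_eq, hFz, ((Polynomial.hasDerivAt _ z).fun_div (Polynomial.hasDerivAt Q z) hQz).deriv]
  have key_z := congrArg (eval z) key
  simp only [eval_mul, eval_sub, eval_C] at key_z ⊢
  field_simp
  linear_combination key_z

end Polynomial

theorem exists_iteratedDeriv_eq {ι κ : Type*} [Fintype ι] [Fintype κ] [DecidableEq ι]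
    [DecidableEq κ] (hι : 1 ≤ Fintype.card ι) (hκ : 1 ≤ Fintype.card κ) (A : ℂ) (a : ι → ℂ)
    (b : κ → ℂ) (m : ι → ℕ) (l : κ → ℕ) {f : ℂ → ℂ}
    (hf : ∀ z, f z = A * (∏ i, (z - a i) ^ m i) / ∏ j, (z - b j) ^ l j) {n : ℕ}
    (hn : ∀ i, n ≤ m i) :
    ∃ g : ℂ[X], DegLEWithCoeff g (n * (Fintype.card ι + Fintype.card κ - 1))
        (∏ k ∈ range n, ((∑ i, (m i : ℂ)) - ∑ j, (l j : ℂ) - k)) ∧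
      ∀ z, (∀ j, z ≠ b j) →
        iteratedDeriv n f z
          = A * (∏ i, (z - a i) ^ (m i - n)) * g.eval z / ∏ j, (z - b j) ^ (l j + n) := by
  induction n with
  | zero => exact ⟨1, ⟨by simp, by simp⟩, fun z _ => by simp [hf]⟩
  | succ n ih =>
    obtain ⟨g, hg, hgf⟩ := ih fun i => n.le_succ.trans (hn i)
    refine ⟨derivNumerator (nodal univ a) (logDerivNumerator univ a fun i => m i - n)
      (nodal univ b) (logDerivNumerator univ b fun j => l j + n) g, ?_, fun z hz => ?_⟩
    · convert hg.derivNumerator hι hκ (degLEWithCoeff_nodal _ _)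
        (degLEWithCoeff_logDerivNumerator _ _ _) (degLEWithCoeff_nodal _ _)
        (degLEWithCoeff_logDerivNumerator _ _ _) using 1
      · ring
      · rw [prod_range_succ, mul_comm]
        congr 1
        have hsub : ∀ i, ((m i - n : ℕ) : ℂ) = m i - n := fun i =>
          Nat.cast_sub (n.le_succ.trans (hn i))
        simp only [hsub, Nat.cast_add, sum_sub_distrib, sum_add_distrib, sum_const, card_univ,
          nsmul_eq_mul, Nat.cast_mul, Nat.cast_sub (by omega : 1 ≤ Fintype.card ι + Fintype.card κ)]
        ring
    · have hmn : ∀ i, m i - n = m i - (n + 1) + 1 := fun i => by have := hn i; omega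
      have hP := prod_X_sub_C_pow_succ univ a fun i => m i - (n + 1)
      have hP' := derivative_prod_X_sub_C_pow_succ univ a fun i => m i - (n + 1)
      simp only [← hmn] at hP hP'
      have hF : iteratedDeriv n f =ᶠ[𝓝 z] fun w =>
          A * (∏ i, (X - C (a i)) ^ (m i - n)).eval w * g.eval w
            / (∏ j, (X - C (b j)) ^ (l j + n)).eval w := by
        filter_upwards [eventually_all.2 fun j => eventually_ne_nhds (hz j)] with w hw
        simp [hgf w hw, eval_prod]
      have hbz : ∀ j ∈ univ, z ≠ b j := fun j _ => hz j
      rw [iteratedDeriv_succ, deriv_eq_of_eventuallyEq_eval_div hF hP hP'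
        (derivative_prod_X_sub_C_pow_mul_nodal _ _ _)
        (by
          simp only [eval_prod, eval_pow, eval_sub, eval_X, eval_C]
          exact prod_ne_zero_iff.2 fun j _ => pow_ne_zero _ (sub_ne_zero.2 (hz j)))
        (eval_nodal_not_at_node hbz)]
      simp [eval_prod, eval_nodal, ← add_assoc, pow_succ, prod_mul_distrib]

theorem stmt5_general (k s t : ℕ) (hs : 1 ≤ s) (ht : 1 ≤ t)
    (A : ℂ) (a : Fin s → ℂ) (b : Fin t → ℂ)
    (m : Fin s → ℕ) (hm : ∀ i, k ≤ m i) (l : Fin t → ℕ)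
    (f : ℂ → ℂ)
    (hf : ∀ z : ℂ, f z = A * (∏ i, (z - a i) ^ (m i)) / ∏ j, (z - b j) ^ (l j))
    (M N : ℕ) (hM : M = ∑ i, m i) (hN : N = ∑ j, l j) :
    ∃ g : ℂ[X], g.natDegree ≤ k * (s + t - 1) ∧
      g.coeff (k * (s + t - 1)) = ∏ i ∈ Finset.range k, ((M : ℂ) - (N : ℂ) - i) ∧
      ∀ z : ℂ, (∀ j, z ≠ b j) →
        iteratedDeriv k f z
          = A * (∏ i, (z - a i) ^ (m i - k)) * g.eval z / ∏ j, (z - b j) ^ (l j + k) := by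
  obtain ⟨g, ⟨hdeg, hcoeff⟩, hgf⟩ :=
    exists_iteratedDeriv_eq (by simpa using hs) (by simpa using ht) A a b m l hf hm
  simp only [Fintype.card_fin] at hdeg hcoeff
  subst hM hN
  exact ⟨g, hdeg, by simpa using hcoeff, hgf⟩

theorem stmt5 (k s t : ℕ) (hk : 1 ≤ k) (hs : 1 ≤ s) (ht : 1 ≤ t)
    (A : ℂ) (hA : A ≠ 0) (a : Fin s → ℂ) (b : Fin t → ℂ)
    (ha : Function.Injective a) (hb : Function.Injective b)
    (hab : ∀ i j, a i ≠ b j)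
    (m : Fin s → ℕ) (hm : ∀ i, k ≤ m i) (l : Fin t → ℕ) (hl : ∀ j, 1 ≤ l j)
    (f : ℂ → ℂ)
    (hf : ∀ z : ℂ, f z = A * (∏ i, (z - a i) ^ (m i)) / ∏ j, (z - b j) ^ (l j))
    (M N : ℕ) (hM : M = ∑ i, m i) (hN : N = ∑ j, l j) :
    ∃ g : ℂ[X], g.natDegree ≤ k * (s + t - 1) ∧
      g.coeff (k * (s + t - 1)) = ∏ i ∈ Finset.range k, ((M : ℂ) - (N : ℂ) - i) ∧
      ∀ z : ℂ, (∀ j, z ≠ b j) →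
        iteratedDeriv k f z
          = A * (∏ i, (z - a i) ^ (m i - k)) * g.eval z / ∏ j, (z - b j) ^ (l j + k) :=
  stmt5_general k s t hs ht A a b m hm l f hf M N hM hN
end

section
/- If f is a non-constant polynomial over ℂ with all zeros of multiplicity at least k ≥ 2, c ≠ 0, n_k ≥ 1, and some n_j with 1 ≤ j ≤ k−1 is at least 1, then the polynomial f(f')^{n₁}⋯(f^{(k)})^{n_k} − c cannot have all of its zeros at a single point; i.e., it has at least two distinct roots. -/
open Polynomial

private lemma iter_deriv_ne_zero : ∀ (j : ℕ) (p : ℂ[X]), j ≤ p.natDegree → p ≠ 0 →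
    derivative^[j] p ≠ 0 := by
  intro j
  induction j with
  | zero => intro p _ hp; simpa using hp
  | succ n ih =>
    intro p hj hp
    have h1 : 0 < p.natDegree := lt_of_lt_of_le (Nat.succ_pos n) hj
    have hdeg := Polynomial.degree_derivative_eq p h1
    have hd0 : derivative p ≠ 0 := by
      intro h
      rw [h, Polynomial.degree_zero] at hdeg
      exact WithBot.bot_ne_coe hdeg
    have hnd : (derivative p).natDegree = p.natDegree - 1 :=
      Polynomial.natDegree_eq_of_degree_eq_some hdeg
    rw [Function.iterate_succ_apply]
    exact ih _ (by omega) hd0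

theorem stmt12 (k : ℕ) (hk : 2 ≤ k) (ν : ℕ → ℕ) (hνk : 1 ≤ ν k)
    (hsum : 1 ≤ ∑ j ∈ Finset.Icc 1 (k - 1), ν j)
    (f : ℂ[X]) (hf : 1 ≤ f.natDegree)
    (hmult : ∀ z : ℂ, f.IsRoot z → k ≤ f.rootMultiplicity z)
    (c : ℂ) (hc : c ≠ 0) :
    ∃ z₁ z₂ : ℂ, z₁ ≠ z₂ ∧
      (f * ∏ j ∈ Finset.Icc 1 k, (derivative^[j] f) ^ (ν j) - C c).IsRoot z₁ ∧
      (f * ∏ j ∈ Finset.Icc 1 k, (derivative^[j] f) ^ (ν j) - C c).IsRoot z₂ := by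
  set P : ℂ[X] := ∏ j ∈ Finset.Icc 1 k, (derivative^[j] f) ^ (ν j) with hP
  set g : ℂ[X] := f * P with hg
  set F : ℂ[X] := g - C c with hF
  have hf0 : f ≠ 0 := fun h => by simp [h] at hf
  -- f has a root w of multiplicity ≥ k
  have hdegf : 0 < f.degree := natDegree_pos_iff_degree_pos.mp hf
  obtain ⟨w, hw⟩ := Complex.exists_root hdegf
  have hkw : k ≤ f.rootMultiplicity w := hmult w hw
  have hdvdf : (X - C w) ^ f.rootMultiplicity w ∣ f := pow_rootMultiplicity_dvd f w
  have hkf : k ≤ f.natDegree := by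
    have h := Polynomial.natDegree_le_of_dvd hdvdf hf0
    rw [Polynomial.natDegree_pow, Polynomial.natDegree_X_sub_C, mul_one] at h
    omega
  -- the product is nonzero
  have hP0 : P ≠ 0 := by
    rw [hP]
    apply Finset.prod_ne_zero_iff.mpr
    intro j hj
    apply pow_ne_zero
    exact iter_deriv_ne_zero j f (le_trans (Finset.mem_Icc.mp hj).2 hkf) hf0
  have hg0 : g ≠ 0 := mul_ne_zero hf0 hP0
  have hgdeg : 1 ≤ g.natDegree := by
    rw [hg, Polynomial.natDegree_mul hf0 hP0]
    omega
  have hFdeg : F.natDegree = g.natDegree := by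
    rw [hF, Polynomial.natDegree_sub_C]
  have hF0 : F ≠ 0 := by
    intro h
    rw [h] at hFdeg
    simp at hFdeg
    omega
  have hFdegpos : 0 < F.degree := by
    rw [Polynomial.degree_eq_natDegree hF0]
    exact_mod_cast by omega
  obtain ⟨z₀, hz₀⟩ := Complex.exists_root hFdegpos
  by_contra hcon
  have hall : ∀ z : ℂ, F.IsRoot z → z = z₀ := by
    intro z hz
    by_contra hne
    exact hcon ⟨z, z₀, hne, hz, hz₀⟩
  set n := F.natDegree with hn
  have hsplit : F.roots.card = F.natDegree :=
    (Polynomial.splits_iff_card_roots.mp (IsAlgClosed.splits F))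
  have hrep : F.roots = Multiset.replicate n z₀ :=
    Multiset.eq_replicate.mpr ⟨hsplit, fun b hb => hall b ((mem_roots'.mp hb).2)⟩
  have ha : F.leadingCoeff ≠ 0 := leadingCoeff_ne_zero.mpr hF0
  have hFeq : F = C F.leadingCoeff * (X - C z₀) ^ n := by
    conv_lhs => rw [← Polynomial.C_leadingCoeff_mul_prod_multiset_X_sub_C hsplit]
    rw [hrep, Multiset.map_replicate, Multiset.prod_replicate]
  -- derivative of g at w is 0
  have h2dvd : (X - C w) ^ 2 ∣ g := by
    have h1 : (X - C w) ^ 2 ∣ f :=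
      dvd_trans (pow_dvd_pow _ (le_trans hk hkw)) hdvdf
    exact h1.trans (dvd_mul_right f P)
  obtain ⟨q, hq⟩ := h2dvd
  have hgw : (derivative g).eval w = 0 := by
    rw [hq, derivative_mul]
    simp [derivative_pow, eval_mul, eval_pow, sub_self]
  -- derivative of F equals derivative of g
  have hdF : derivative F = derivative g := by
    rw [hF]
    simp
  have hderiv : derivative F = C F.leadingCoeff * (C (n : ℂ) * (X - C z₀) ^ (n - 1)) := by
    rw [hFeq, derivative_mul, derivative_C, zero_mul, zero_add, derivative_pow]
    simp [mul_assoc]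
  have heval : F.leadingCoeff * ((n : ℂ) * (w - z₀) ^ (n - 1)) = 0 := by
    have := hgw
    rw [← hdF, hderiv] at this
    simpa using this
  have hn1 : 1 ≤ n := by rw [hFdeg]; exact hgdeg
  have hnc : (n : ℂ) ≠ 0 := Nat.cast_ne_zero.mpr (by omega)
  have hpow : (w - z₀) ^ (n - 1) = 0 := by
    rcases mul_eq_zero.mp heval with h | h
    · exact absurd h ha
    · rcases mul_eq_zero.mp h with h' | h'
      · exact absurd h' hnc
      · exact h'
  have hwz : w = z₀ := sub_eq_zero.mp (pow_eq_zero_iff'.mp hpow).1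
  -- contradiction: g(z₀) = c but also g(w) = 0
  have hgz₀ : g.eval z₀ = c := by
    have := hz₀
    rw [hF] at this
    simpa [Polynomial.IsRoot, sub_eq_zero] using this
  have hgw0 : g.eval w = 0 := by
    rw [hg, eval_mul, hw, zero_mul]
  rw [hwz, hgz₀] at hgw0
  exact hc hgw0
end
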